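/- Let A be a nilpotent linear endomorphism of a finite-dimensional real vector space V and z ∈ V. If there is a sequence t_n → ∞ with exp(t_n A) z → z, then A z = 0. -/

import Mathlib

/-- If `A` is a nilpotent endomorphism of a finite-dimensional real vector space and there is a
sequence `t_n → ∞` with `exp(t_n A) z → z`, then `A z = 0`. -/
theorem stmt1 {V : Type*} [NormedAddCommGroup V] [NormedSpace ℝ V] [FiniteDimensional ℝ V]
    (A : V →ₗ[ℝ] V) (N : ℕ) (hA : A ^ N = 0) (z : V) (t : ℕ → ℝ)
    (ht : Filter.Tendsto t Filter.atTop Filter.atTop)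
    (hrec : Filter.Tendsto
      (fun n => (∑ k ∈ Finset.range N, (t n ^ k / (k.factorial : ℝ)) • (A ^ k)) z)
      Filter.atTop (nhds z)) :
    A z = 0 := by
  rcases Nat.lt_or_ge N 2 with hN | hN
  · interval_cases N
    · have hz : z = 0 := by simpa using LinearMap.congr_fun hA z
      simp [hz]
    · simpa using LinearMap.congr_fun hA z
  by_contra hz
  obtain ⟨φ, hφ⟩ := SeparatingDual.exists_ne_zero (R := ℝ) hz
  set P : Polynomial ℝ :=
    ∑ k ∈ Finset.range N, Polynomial.C (φ ((A ^ k) z) / (k.factorial : ℝ)) * Polynomial.X ^ k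
    with hP
  have hcoeff : P.coeff 1 = φ (A z) := by
    rw [hP, Polynomial.finset_sum_coeff]
    have h1 : (1 : ℕ) ∈ Finset.range N := Finset.mem_range.2 (by omega)
    rw [Finset.sum_eq_single 1]
    · simp
    · intro b hb hb1
      simp [Polynomial.coeff_X_pow, Ne.symm hb1]
    · intro h; exact absurd h1 h
  have heval : ∀ s : ℝ,
      P.eval s = φ ((∑ k ∈ Finset.range N, (s ^ k / (k.factorial : ℝ)) • (A ^ k)) z) := by
    intro s
    rw [hP, Polynomial.eval_finset_sum, LinearMap.sum_apply, map_sum]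
    refine Finset.sum_congr rfl fun k _ => ?_
    rw [LinearMap.smul_apply, map_smul, Polynomial.eval_mul, Polynomial.eval_C,
      Polynomial.eval_pow, Polynomial.eval_X, smul_eq_mul]
    ring
  have hdeg : 0 < P.degree := by
    have := Polynomial.le_degree_of_ne_zero (n := 1) (by rw [hcoeff]; exact hφ)
    exact lt_of_lt_of_le (by norm_num) this
  have htop : Filter.Tendsto (fun n => |P.eval (t n)|) Filter.atTop Filter.atTop :=
    (Polynomial.abs_tendsto_atTop P hdeg).comp ht
  have hlim : Filter.Tendsto (fun n => |P.eval (t n)|) Filter.atTop (nhds |φ z|) := by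
    have := (φ.continuous.tendsto z).comp hrec
    have h2 : Filter.Tendsto (fun n => P.eval (t n)) Filter.atTop (nhds (φ z)) := by
      simpa only [heval, Function.comp_def] using this
    exact h2.abs
  exact not_tendsto_atTop_of_tendsto_nhds hlim htop
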